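/- Suppose λ_j is a simple eigenvalue of Σ with gap g_j > 0 and δ_j < 1/2. Then P_j (I − P̂_j) = P_j E R̂_j, where R̂_j = Σ_{k≠j} (λ̂_k − λ_j)^{-1} P̂_k is the reduced resolvent of Σ̂ at λ_j (well-defined since |λ̂_k − λ_j| > 0 for all k ≠ j under the hypothesis). -/

import Mathlib

open Matrix Finset

noncomputable def opNorm {d : ℕ} (A : Matrix (Fin d) (Fin d) ℝ) : ℝ :=
  ‖Matrix.toEuclideanCLM (𝕜 := ℝ) A‖

noncomputable def hsNorm {d : ℕ} (A : Matrix (Fin d) (Fin d) ℝ) : ℝ :=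
  Real.sqrt (Matrix.trace (Aᵀ * A))

noncomputable def proj {d : ℕ} (u : Fin d → ℝ) : Matrix (Fin d) (Fin d) ℝ :=
  Matrix.vecMulVec u u

/-- `|R_j|^{1/2}` : square root of the absolute value of the reduced resolvent. -/
noncomputable def sqrtAbsRes {d : ℕ} (lam : Fin d → ℝ) (u : Fin d → Fin d → ℝ)
    (j : Fin d) : Matrix (Fin d) (Fin d) ℝ :=
  ∑ k ∈ Finset.univ.filter (fun k => k ≠ j), (Real.sqrt |lam k - lam j|)⁻¹ • proj (u k)

/-- `|R_j|^{-1/2}`. -/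
noncomputable def invSqrtAbsRes {d : ℕ} (lam : Fin d → ℝ) (u : Fin d → Fin d → ℝ)
    (j : Fin d) : Matrix (Fin d) (Fin d) ℝ :=
  ∑ k ∈ Finset.univ.filter (fun k => k ≠ j), Real.sqrt |lam k - lam j| • proj (u k)

/-- the reduced resolvent `R_j`. -/
noncomputable def res {d : ℕ} (lam : Fin d → ℝ) (u : Fin d → Fin d → ℝ)
    (j : Fin d) : Matrix (Fin d) (Fin d) ℝ :=
  ∑ k ∈ Finset.univ.filter (fun k => k ≠ j), (lam k - lam j)⁻¹ • proj (u k)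

/-- `δ_j`. -/
noncomputable def delta {d : ℕ} (lam : Fin d → ℝ) (u : Fin d → Fin d → ℝ) (j : Fin d)
    (gj : ℝ) (E : Matrix (Fin d) (Fin d) ℝ) : ℝ :=
  opNorm ((sqrtAbsRes lam u j + (Real.sqrt gj)⁻¹ • proj (u j)) * E *
    (sqrtAbsRes lam u j + (Real.sqrt gj)⁻¹ • proj (u j)))

/-- `δ'_j`. -/
noncomputable def delta' {d : ℕ} (lam : Fin d → ℝ) (u : Fin d → Fin d → ℝ) (j : Fin d)
    (gj : ℝ) (E : Matrix (Fin d) (Fin d) ℝ) : ℝ :=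
  max (opNorm (sqrtAbsRes lam u j * E * sqrtAbsRes lam u j))
    (max ((Real.sqrt gj)⁻¹ * hsNorm (sqrtAbsRes lam u j * E * proj (u j)))
      (gj⁻¹ * hsNorm (proj (u j) * E * proj (u j))))

/-!
Since `Σ̂ - Σ = E` and `P_j Σ = λ_j P_j`, we get `P_j E R̂_j = P_j (Σ̂ - λ_j) R̂_j = P_j (I - P̂_j)`,
provided no `λ̂_k` with `k ≠ j` equals `λ_j`. Writing `W = |R_j|⁻¹ + g_j P_j`, the definition of
`δ_j` gives `|vᵀ E v| ≤ δ_j · vᵀ W v`. If `λ̂_k = λ_j` for some `k < j`, a dimension count yields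
`v ≠ 0` orthogonal to `u_i` (`i ≥ j`) and to `û_i` (`i < k`); then `vᵀ W v = vᵀ (Σ - λ_j) v > 0`
while `vᵀ (Σ̂ - λ_j) v ≤ 0`, so `|vᵀ E v| ≥ vᵀ W v` and `δ_j ≥ 1`. The case `k > j` is the mirror image.
-/

section Orthonormal

variable {d : ℕ} {u : Fin d → Fin d → ℝ}

theorem proj_mulVec (a v : Fin d → ℝ) : proj a *ᵥ v = (a ⬝ᵥ v) • a := by
  rw [proj, vecMulVec_mulVec, op_smul_eq_smul]

theorem proj_transpose (a : Fin d → ℝ) : (proj a)ᵀ = proj a :=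
  transpose_vecMulVec a a

theorem proj_mul_proj (a b : Fin d → ℝ) : proj a * proj b = (a ⬝ᵥ b) • vecMulVec a b := by
  rw [proj, proj, vecMulVec_mul_vecMulVec]
  ext i k
  simp only [vecMulVec_apply, Pi.smul_apply, smul_eq_mul, Matrix.smul_apply]
  ring

theorem dotProduct_sum_smul (hu : ∀ k l, u k ⬝ᵥ u l = if k = l then (1 : ℝ) else 0)
    (t : Fin d → ℝ) (k : Fin d) : u k ⬝ᵥ ∑ l, t l • u l = t k := by
  simp [dotProduct_sum, hu]

theorem sum_proj_eq_one (hu : ∀ k l, u k ⬝ᵥ u l = if k = l then (1 : ℝ) else 0) :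
    ∑ k, proj (u k) = 1 := by
  have hrows : Matrix.of u * (Matrix.of u)ᵀ = 1 := by
    ext k l
    simpa [Matrix.mul_apply, dotProduct, Matrix.one_apply] using hu k l
  ext a b
  rw [← mul_eq_one_comm.mp hrows]
  simp only [Matrix.mul_apply, proj, Matrix.sum_apply, vecMulVec_apply, transpose_apply,
    Matrix.of_apply]

theorem sum_dotProduct_smul (hu : ∀ k l, u k ⬝ᵥ u l = if k = l then (1 : ℝ) else 0)
    (v : Fin d → ℝ) : ∑ k, (u k ⬝ᵥ v) • u k = v := by
  simp_rw [← proj_mulVec, ← sum_mulVec, sum_proj_eq_one hu, one_mulVec]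

theorem dotProduct_sum_smul_proj_mulVec (s : Finset (Fin d)) (μ : Fin d → ℝ) (v : Fin d → ℝ) :
    v ⬝ᵥ ((∑ k ∈ s, μ k • proj (u k)) *ᵥ v) = ∑ k ∈ s, μ k * (u k ⬝ᵥ v) ^ 2 := by
  rw [sum_mulVec, dotProduct_sum]
  refine Finset.sum_congr rfl fun k _ => ?_
  rw [smul_mulVec, proj_mulVec, dotProduct_smul, dotProduct_smul, dotProduct_comm v, smul_eq_mul,
    smul_eq_mul]
  ring

theorem dotProduct_self_eq_sum_sq (hu : ∀ k l, u k ⬝ᵥ u l = if k = l then (1 : ℝ) else 0)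
    (v : Fin d → ℝ) : v ⬝ᵥ v = ∑ k, (u k ⬝ᵥ v) ^ 2 := by
  simpa [sum_proj_eq_one hu] using dotProduct_sum_smul_proj_mulVec (u := u) univ 1 v

theorem sum_smul_proj_mul_proj (hu : ∀ k l, u k ⬝ᵥ u l = if k = l then (1 : ℝ) else 0)
    (μ : Fin d → ℝ) (k : Fin d) : (∑ l, μ l • proj (u l)) * proj (u k) = μ k • proj (u k) := by
  rw [Finset.sum_mul, Finset.sum_eq_single k]
  · rw [smul_mul_assoc, proj_mul_proj, hu, if_pos rfl, one_smul, proj]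
  · intro l _ hl
    rw [smul_mul_assoc, proj_mul_proj, hu, if_neg hl, zero_smul, smul_zero]
  · simp

theorem proj_mul_sum_smul_proj (hu : ∀ k l, u k ⬝ᵥ u l = if k = l then (1 : ℝ) else 0)
    (μ : Fin d → ℝ) (k : Fin d) : proj (u k) * (∑ l, μ l • proj (u l)) = μ k • proj (u k) := by
  have := congrArg transpose (sum_smul_proj_mul_proj hu μ k)
  simpa only [transpose_mul, transpose_sum, transpose_smul, proj_transpose] using this

end Orthonormal
theorem exists_ne_zero_forall_dotProduct_eq_zero {K ι n : Type*} [Field K] [Fintype ι]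
    [Fintype n] (a : ι → n → K) (h : Fintype.card ι < Fintype.card n) :
    ∃ v ≠ 0, ∀ i, a i ⬝ᵥ v = 0 := by
  have hker : (Matrix.of a).mulVecLin.ker ≠ ⊥ :=
    LinearMap.ker_ne_bot_of_finrank_lt (by simpa using h)
  obtain ⟨v, hv, hv0⟩ := (Submodule.ne_bot_iff _).mp hker
  exact ⟨v, hv0, fun i => congrFun (hv : Matrix.of a *ᵥ v = 0) i⟩

theorem abs_dotProduct_mulVec_le_opNorm {d : ℕ} (M : Matrix (Fin d) (Fin d) ℝ)
    (w : Fin d → ℝ) : |w ⬝ᵥ (M *ᵥ w)| ≤ opNorm M * (w ⬝ᵥ w) := by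
  set x : EuclideanSpace ℝ (Fin d) := WithLp.toLp 2 w
  have hform : w ⬝ᵥ (M *ᵥ w) = inner ℝ x (Matrix.toEuclideanCLM (𝕜 := ℝ) M x) := by
    rw [inner_toEuclideanCLM]
  have hnorm : w ⬝ᵥ w = ‖x‖ ^ 2 := by
    rw [← real_inner_self_eq_norm_sq, EuclideanSpace.inner_eq_star_dotProduct]
    simp [x]
  rw [hform, hnorm, opNorm, sq, ← mul_assoc, mul_comm _ ‖x‖]
  exact (abs_real_inner_le_norm _ _).trans
    (mul_le_mul_of_nonneg_left (ContinuousLinearMap.le_opNorm _ _) (norm_nonneg _))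

section Perturbation

variable {d : ℕ} {u : Fin d → Fin d → ℝ}

theorem abs_dotProduct_mulVec_le_opNorm_conj
    (hu : ∀ k l, u k ⬝ᵥ u l = if k = l then (1 : ℝ) else 0)
    (b : Fin d → ℝ) (hb : ∀ k, 0 < b k) (E : Matrix (Fin d) (Fin d) ℝ) (v : Fin d → ℝ) :
    |v ⬝ᵥ (E *ᵥ v)| ≤
      opNorm ((∑ k, (b k)⁻¹ • proj (u k)) * E * ∑ k, (b k)⁻¹ • proj (u k)) *
        ∑ k, b k ^ 2 * (u k ⬝ᵥ v) ^ 2 := by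
  set A := ∑ k, (b k)⁻¹ • proj (u k)
  set w := ∑ k, (b k * (u k ⬝ᵥ v)) • u k
  have hAw : A *ᵥ w = v := by
    conv_rhs => rw [← sum_dotProduct_smul hu v]
    refine (sum_mulVec _ _ _).trans (Finset.sum_congr rfl fun k _ => ?_)
    rw [smul_mulVec, proj_mulVec, dotProduct_sum_smul hu, smul_smul, inv_mul_cancel_left₀ (hb k).ne']
  have hA : Aᵀ = A := by
    simp only [A, transpose_sum, transpose_smul, proj_transpose]
  have hform : v ⬝ᵥ (E *ᵥ v) = w ⬝ᵥ ((A * E * A) *ᵥ w) := by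
    rw [← mulVec_mulVec, ← mulVec_mulVec, hAw, dotProduct_mulVec w A, ← hA, vecMul_transpose, hAw]
  have hnorm : w ⬝ᵥ w = ∑ k, b k ^ 2 * (u k ⬝ᵥ v) ^ 2 := by
    simp only [dotProduct_self_eq_sum_sq hu, w, dotProduct_sum_smul hu, mul_pow]
  rw [hform, ← hnorm]
  exact abs_dotProduct_mulVec_le_opNorm _ _

theorem abs_dotProduct_mulVec_le_delta
    (hu : ∀ k l, u k ⬝ᵥ u l = if k = l then (1 : ℝ) else 0)
    {lam : Fin d → ℝ} {j : Fin d} {gj : ℝ} (hgj : 0 < gj) (hsep : ∀ k ≠ j, lam k ≠ lam j)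
    (E : Matrix (Fin d) (Fin d) ℝ) (v : Fin d → ℝ) :
    |v ⬝ᵥ (E *ᵥ v)| ≤
      delta lam u j gj E * ∑ k, (if k = j then gj else |lam k - lam j|) * (u k ⬝ᵥ v) ^ 2 := by
  set weight : Fin d → ℝ := fun k => if k = j then gj else |lam k - lam j|
  have hweight : ∀ k, 0 < weight k := by
    intro k
    by_cases hk : k = j
    · simpa [weight, hk] using hgj
    · simpa [weight, hk, sub_eq_zero] using hsep k hk
  have hA : sqrtAbsRes lam u j + (Real.sqrt gj)⁻¹ • proj (u j) =
      ∑ k, (Real.sqrt (weight k))⁻¹ • proj (u k) := by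
    rw [sqrtAbsRes, Finset.filter_ne', ← Finset.sum_erase_add _ _ (mem_univ j)]
    congr 1
    · exact Finset.sum_congr rfl fun k hk => by simp [weight, Finset.ne_of_mem_erase hk]
    · simp [weight]
  have hsq : ∀ k, Real.sqrt (weight k) ^ 2 = weight k := fun k => Real.sq_sqrt (hweight k).le
  simpa only [delta, hA, hsq] using
    abs_dotProduct_mulVec_le_opNorm_conj hu _ (fun k => Real.sqrt_pos.2 (hweight k)) E v

end Perturbation

section Crossing

variable {d : ℕ} {u uh : Fin d → Fin d → ℝ} {lam lamh : Fin d → ℝ} {j : Fin d} {gj : ℝ}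
  {E : Matrix (Fin d) (Fin d) ℝ}

theorem one_le_delta_of_rayleigh_crossing
    (hu : ∀ k l, u k ⬝ᵥ u l = if k = l then (1 : ℝ) else 0)
    (huh : ∀ k l, uh k ⬝ᵥ uh l = if k = l then (1 : ℝ) else 0)
    (hgj : 0 < gj) (hgap : ∀ k ≠ j, gj ≤ |lam k - lam j|)
    (hdecomp : (∑ k, lam k • proj (u k)) + E = ∑ k, lamh k • proj (uh k))
    {σ : ℝ} (hσ : |σ| = 1) {v : Fin d → ℝ} (hv : v ≠ 0)
    (hvu : ∀ k, u k ⬝ᵥ v ≠ 0 → k ≠ j ∧ 0 ≤ σ * (lam k - lam j))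
    (hvuh : ∀ k, uh k ⬝ᵥ v ≠ 0 → σ * (lamh k - lam j) ≤ 0) :
    1 ≤ delta lam u j gj E := by
  set W := ∑ k, (if k = j then gj else |lam k - lam j|) * (u k ⬝ᵥ v) ^ 2
  have hsep : ∀ k ≠ j, lam k ≠ lam j := fun k hk h => by
    have := hgap k hk
    rw [h, sub_self, abs_zero] at this
    linarith
  have hW_pos : 0 < W := by
    have hv2 : 0 < v ⬝ᵥ v := by
      simpa [dotProduct_self_star_eq_zero] using dotProduct_self_star_pos_iff.mpr hv
    calc 0 < gj * (v ⬝ᵥ v) := mul_pos hgj hv2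
      _ = ∑ k, gj * (u k ⬝ᵥ v) ^ 2 := by rw [dotProduct_self_eq_sum_sq hu, mul_sum]
      _ ≤ W := by
        refine sum_le_sum fun k _ => mul_le_mul_of_nonneg_right ?_ (sq_nonneg _)
        split_ifs with hk
        exacts [le_rfl, hgap k hk]
  have hW : W = σ * (v ⬝ᵥ ((∑ k, lam k • proj (u k)) *ᵥ v) - lam j * (v ⬝ᵥ v)) := by
    rw [dotProduct_sum_smul_proj_mulVec, dotProduct_self_eq_sum_sq hu, mul_sum, ← sum_sub_distrib,
      mul_sum]
    refine sum_congr rfl fun k _ => ?_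
    by_cases hc : u k ⬝ᵥ v = 0
    · simp [hc]
    obtain ⟨hk, hσk⟩ := hvu k hc
    have habs : |lam k - lam j| = σ * (lam k - lam j) := by
      rw [← abs_of_nonneg hσk, abs_mul, hσ, one_mul]
    rw [if_neg hk, habs]
    ring
  have hhat : σ * (v ⬝ᵥ ((∑ k, lamh k • proj (uh k)) *ᵥ v) - lam j * (v ⬝ᵥ v)) ≤ 0 := by
    rw [dotProduct_sum_smul_proj_mulVec, dotProduct_self_eq_sum_sq huh, mul_sum,
      ← sum_sub_distrib, mul_sum]
    refine sum_nonpos fun k _ => ?_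
    by_cases hc : uh k ⬝ᵥ v = 0
    · simp [hc]
    calc σ * (lamh k * (uh k ⬝ᵥ v) ^ 2 - lam j * (uh k ⬝ᵥ v) ^ 2)
        = σ * (lamh k - lam j) * (uh k ⬝ᵥ v) ^ 2 := by ring
      _ ≤ 0 := mul_nonpos_of_nonpos_of_nonneg (hvuh k hc) (sq_nonneg _)
  have hE : v ⬝ᵥ (E *ᵥ v) = v ⬝ᵥ ((∑ k, lamh k • proj (uh k)) *ᵥ v) -
      v ⬝ᵥ ((∑ k, lam k • proj (u k)) *ᵥ v) := by
    rw [← dotProduct_sub, ← sub_mulVec, ← hdecomp, add_sub_cancel_left]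
  have hW_le : W ≤ |v ⬝ᵥ (E *ᵥ v)| := by
    rw [← one_mul |_|, ← hσ, ← abs_mul]
    refine le_trans ?_ (neg_le_abs _)
    rw [hE, hW]
    linarith
  have hbound := abs_dotProduct_mulVec_le_delta hu hgj hsep E v
  exact le_of_mul_le_mul_right (by linarith) hW_pos

theorem lamh_ne_of_delta_lt_one
    (hu : ∀ k l, u k ⬝ᵥ u l = if k = l then (1 : ℝ) else 0)
    (huh : ∀ k l, uh k ⬝ᵥ uh l = if k = l then (1 : ℝ) else 0)
    (hlam : Antitone lam) (hlamh : Antitone lamh)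
    (hgj : 0 < gj) (hgap : ∀ k ≠ j, gj ≤ |lam k - lam j|)
    (hdecomp : (∑ k, lam k • proj (u k)) + E = ∑ k, lamh k • proj (uh k))
    (hδ : delta lam u j gj E < 1) {k : Fin d} (hk : k ≠ j) : lamh k ≠ lam j := by
  intro hcol
  refine hδ.not_ge ?_
  rcases hk.lt_or_gt with hkj | hjk
  · obtain ⟨v, hv, hvS⟩ := exists_ne_zero_forall_dotProduct_eq_zero
      (Sum.elim (fun i : Ici j => u i) (fun i : Iio k => uh i)) (by
        have := Fin.lt_def.1 hkj
        simp only [Fintype.card_sum, Fintype.card_coe, Fin.card_Ici, Fin.card_Iio, Fintype.card_fin]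
        omega)
    refine one_le_delta_of_rayleigh_crossing hu huh hgj hgap hdecomp (σ := 1) abs_one hv
      (fun i hi => ?_) (fun i hi => ?_)
    · have hij : i < j := lt_of_not_ge fun h => hi (hvS (Sum.inl ⟨i, mem_Ici.2 h⟩))
      exact ⟨hij.ne, by simpa using hlam hij.le⟩
    · have hki : k ≤ i := le_of_not_gt fun h => hi (hvS (Sum.inr ⟨i, mem_Iio.2 h⟩))
      simpa [hcol] using hlamh hki
  · obtain ⟨v, hv, hvS⟩ := exists_ne_zero_forall_dotProduct_eq_zero
      (Sum.elim (fun i : Iic j => u i) (fun i : Ioi k => uh i)) (by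
        have := Fin.lt_def.1 hjk
        simp only [Fintype.card_sum, Fintype.card_coe, Fin.card_Iic, Fin.card_Ioi, Fintype.card_fin]
        omega)
    refine one_le_delta_of_rayleigh_crossing hu huh hgj hgap hdecomp (σ := -1) (by simp) hv
      (fun i hi => ?_) (fun i hi => ?_)
    · have hji : j < i := lt_of_not_ge fun h => hi (hvS (Sum.inl ⟨i, mem_Iic.2 h⟩))
      exact ⟨hji.ne', by simpa using hlam hji.le⟩
    · have hik : i ≤ k := le_of_not_gt fun h => hi (hvS (Sum.inr ⟨i, mem_Ioi.2 h⟩))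
      simpa [hcol] using hlamh hik

end Crossing

theorem sum_smul_proj_sub_smul_one_mul_reducedResolvent {d : ℕ} {u : Fin d → Fin d → ℝ}
    (hu : ∀ k l, u k ⬝ᵥ u l = if k = l then (1 : ℝ) else 0)
    {μ : Fin d → ℝ} {c : ℝ} {j : Fin d} (hne : ∀ k ≠ j, μ k ≠ c) :
    (∑ k, μ k • proj (u k) - c • 1) *
        ∑ k ∈ univ.filter (fun k => k ≠ j), (μ k - c)⁻¹ • proj (u k) = 1 - proj (u j) := by
  rw [mul_sum, sum_congr rfl fun k hk => ?_, filter_ne', sum_erase_eq_sub (mem_univ j),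
    sum_proj_eq_one hu]
  rw [mul_smul_comm, sub_mul, sum_smul_proj_mul_proj hu, smul_mul_assoc, one_mul, ← sub_smul,
    smul_smul, inv_mul_cancel₀ (sub_ne_zero.2 (hne k (mem_filter.1 hk).2)), one_smul]

theorem stmt5_general {d : ℕ} (lam : Fin d → ℝ) (u : Fin d → Fin d → ℝ)
    (hON : ∀ k l, u k ⬝ᵥ u l = if k = l then (1 : ℝ) else 0)
    (hlam : Antitone lam)
    (E : Matrix (Fin d) (Fin d) ℝ)
    (j : Fin d) (gj : ℝ) (hgj_pos : 0 < gj)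
    (hgj : IsLeast {x : ℝ | ∃ k, k ≠ j ∧ x = |lam k - lam j|} gj)
    (lamh : Fin d → ℝ) (uh : Fin d → Fin d → ℝ)
    (hONh : ∀ k l, uh k ⬝ᵥ uh l = if k = l then (1 : ℝ) else 0)
    (hlamh : Antitone lamh)
    (hdecomp : (∑ k, lam k • proj (u k)) + E = ∑ k, lamh k • proj (uh k))
    (hdelta : delta lam u j gj E < 1 / 2) :
    proj (u j) * (1 - proj (uh j)) =
      proj (u j) * E *
        (∑ k ∈ Finset.univ.filter (fun k => k ≠ j), (lamh k - lam j)⁻¹ • proj (uh k)) := by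
  have hgap : ∀ k ≠ j, gj ≤ |lam k - lam j| := fun k hk => hgj.2 ⟨k, hk, rfl⟩
  have hne : ∀ k ≠ j, lamh k ≠ lam j := fun k hk =>
    lamh_ne_of_delta_lt_one hON hONh hlam hlamh hgj_pos hgap hdecomp (by linarith) hk
  have hPE : proj (u j) * E = proj (u j) * (∑ k, lamh k • proj (uh k) - lam j • 1) := by
    rw [← hdecomp, mul_sub, mul_add, proj_mul_sum_smul_proj hON, mul_smul_comm, mul_one]
    abel
  rw [hPE, mul_assoc, sum_smul_proj_sub_smul_one_mul_reducedResolvent hONh hne]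

theorem stmt5 {d : ℕ} (lam : Fin d → ℝ) (u : Fin d → Fin d → ℝ)
    (hON : ∀ k l, u k ⬝ᵥ u l = if k = l then (1 : ℝ) else 0)
    (hlam : Antitone lam)
    (E : Matrix (Fin d) (Fin d) ℝ) (hE : E.IsSymm)
    (j : Fin d) (gj : ℝ) (hgj_pos : 0 < gj)
    (hgj : IsLeast {x : ℝ | ∃ k, k ≠ j ∧ x = |lam k - lam j|} gj)
    (lamh : Fin d → ℝ) (uh : Fin d → Fin d → ℝ)
    (hONh : ∀ k l, uh k ⬝ᵥ uh l = if k = l then (1 : ℝ) else 0)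
    (hlamh : Antitone lamh)
    (hdecomp : (∑ k, lam k • proj (u k)) + E = ∑ k, lamh k • proj (uh k))
    (hdelta : delta lam u j gj E < 1 / 2) :
    proj (u j) * (1 - proj (uh j)) =
      proj (u j) * E *
        (∑ k ∈ Finset.univ.filter (fun k => k ≠ j), (lamh k - lam j)⁻¹ • proj (uh k)) :=
  stmt5_general lam u hON hlam E j gj hgj_pos hgj lamh uh hONh hlamh hdecomp hdelta
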